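/- Let X be a separable F-space and T a continuous linear operator on X. If there exists x ∈ X such that for every non-empty open set U ⊆ X the set N(x,U) = {n ∈ ℕ : Tⁿx ∈ U} has positive upper Banach density (i.e., T is reiteratively hypercyclic), then T is topologically ergodic: for all non-empty open sets U, V ⊆ X, the set N(U,V) = {n ∈ ℕ : Tⁿ(U) ∩ V ≠ ∅} is syndetic. -/

import Mathlib

/-!
If `N(x, W)` has positive upper Banach density for every non-empty open `W`, pick times `a ≤ b` with
`Tᵃx ∈ U`, `Tᵇx ∈ V` and put `n = b - a`, `W = U ∩ T⁻ⁿV ∋ Tᵃx`. For `p ≥ q` in `N(x, W)`, the point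
`T^q x ∈ U` is sent into `V` by `T^(p - q + n)`, so `N(x, W) - N(x, W) + n ⊆ N(U, V)`. It remains to
see that the difference set of a set `A` of positive upper Banach density `δ` is syndetic: otherwise
`A - A` has arbitrarily long gaps, which yield shifts `e₀ ≤ e₁ ≤ ⋯` with `eᵢ - eⱼ ∉ A - A`; the `K`
translates `A + eᵢ` are then pairwise disjoint, so every window of length `s` contains at most
`(s + e_K) / K` elements of `A`, and `δ ≤ 1 / K` for all `K`.
-/

open Filter

noncomputable def upperCount (A : Set ℕ) (s : ℕ) : ℝ :=
  limsup (fun k : ℕ => ((A ∩ Set.Icc (k + 1) (k + s)).ncard : ℝ)) atTop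

noncomputable def upperBanachDensity (A : Set ℕ) : ℝ :=
  limsup (fun s : ℕ => upperCount A s / s) atTop

/-- A set `S ⊆ ℕ` is syndetic: it has bounded gaps. -/
def SyndeticN (S : Set ℕ) : Prop :=
  ∃ M : ℕ, 0 < M ∧ ∀ n : ℕ, ∃ s ∈ S, n ≤ s ∧ s < n + M

open Function

section UpperBanachDensity

variable {A : Set ℕ}

lemma ncard_inter_Icc_le (A : Set ℕ) (k s : ℕ) : (A ∩ Set.Icc (k + 1) (k + s)).ncard ≤ s :=
  (Set.ncard_le_ncard Set.inter_subset_right (Set.finite_Icc _ _)).trans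
    (by rw [Set.ncard_Icc_nat]; omega)

lemma ncard_inter_Icc_eq_card_filter (A : Set ℕ) [DecidablePred (· ∈ A)] (k s : ℕ) :
    (A ∩ Set.Icc (k + 1) (k + s)).ncard = ((Finset.Icc (k + 1) (k + s)).filter (· ∈ A)).card := by
  rw [← Set.ncard_coe_finset, Finset.coe_filter]
  congr 1
  ext a
  simp [and_comm]

lemma upperCount_nonneg (A : Set ℕ) (s : ℕ) : 0 ≤ upperCount A s :=
  le_limsup_of_frequently_le (Frequently.of_forall fun _ => by positivity)
    (isBoundedUnder_of ⟨s, fun k => by exact_mod_cast ncard_inter_Icc_le A k s⟩)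

lemma upperBanachDensity_le_of_ncard_le {c C : ℝ}
    (h : ∀ k s, ((A ∩ Set.Icc (k + 1) (k + s)).ncard : ℝ) ≤ c * s + C) :
    upperBanachDensity A ≤ c := by
  have hcount (s : ℕ) : upperCount A s ≤ c * s + C :=
    limsup_le_of_le (isCoboundedUnder_le_of_le atTop fun _ => by positivity)
      (Eventually.of_forall (h · s))
  have hlim : Tendsto (fun s : ℕ => c + C * (1 / s)) atTop (nhds c) := by
    simpa using tendsto_one_div_atTop_nhds_zero_nat.const_mul C |>.const_add c
  have hle : ∀ᶠ s : ℕ in atTop, upperCount A s / s ≤ c + C * (1 / s) := by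
    filter_upwards [eventually_gt_atTop 0] with s hs
    rw [div_le_iff₀ (by exact_mod_cast hs)]
    calc upperCount A s ≤ c * s + C := hcount s
      _ = (c + C * (1 / s)) * s := by field_simp
  calc upperBanachDensity A ≤ limsup (fun s : ℕ => c + C * (1 / s)) atTop :=
        limsup_le_limsup hle
          (isCoboundedUnder_le_of_le atTop fun s =>
            div_nonneg (upperCount_nonneg A s) s.cast_nonneg)
          hlim.isBoundedUnder_le
    _ = c := hlim.limsup_eq

lemma exists_mem_ge_of_upperBanachDensity_pos (h : 0 < upperBanachDensity A) (m : ℕ) :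
    ∃ b ∈ A, m ≤ b := by
  by_contra! hA
  have hcount (k s : ℕ) : ((A ∩ Set.Icc (k + 1) (k + s)).ncard : ℝ) ≤ 0 * s + m := by
    have : A ∩ Set.Icc (k + 1) (k + s) ⊆ Set.Iio m := fun b hb => hA b hb.1
    simpa using (Set.ncard_le_ncard this (Set.finite_Iio m)).trans (by simp)
  linarith [upperBanachDensity_le_of_ncard_le hcount]

end UpperBanachDensity

section DifferenceSet

variable {A : Set ℕ}

def diffSet (A : Set ℕ) : Set ℕ := {d | ∃ p ∈ A, ∃ q ∈ A, q ≤ p ∧ d = p - q}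

/-- Each new shift is put at the start of a gap of `A - A` longer than the previous shift. -/
lemma exists_monotone_sub_notMem_diffSet (h : ¬ SyndeticN (diffSet A)) :
    ∃ e : ℕ → ℕ, Monotone e ∧ ∀ i j, j < i → e i - e j ∉ diffSet A := by
  simp only [SyndeticN, not_exists, not_and, not_forall] at h
  choose gap hgap using fun m : ℕ => h (m + 1) m.succ_pos
  let e : ℕ → ℕ := fun i => Nat.rec 0 (fun _ prev => gap prev + prev) i
  have he : Monotone e := monotone_nat_of_le_succ fun i => Nat.le_add_left (e i) (gap (e i))
  refine ⟨e, he, fun i j hji hD => ?_⟩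
  obtain ⟨i, rfl⟩ := Nat.exists_eq_add_one_of_ne_zero (Nat.ne_zero_of_lt hji)
  have hj : e j ≤ e i := he (Nat.le_of_lt_succ hji)
  exact hgap (e i) _ hD (by change gap (e i) ≤ gap (e i) + e i - e j; omega)
    (by change gap (e i) + e i - e j < _; omega)

/-- `K` translates of a window of `A` by shifts whose differences avoid `A - A` are pairwise
disjoint and fit in a window of length `s + e K`. -/
lemma mul_ncard_inter_Icc_le {e : ℕ → ℕ} (he : Monotone e)
    (hD : ∀ i j, j < i → e i - e j ∉ diffSet A) (K k s : ℕ) :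
    K * (A ∩ Set.Icc (k + 1) (k + s)).ncard ≤ s + e K := by
  classical
  rw [ncard_inter_Icc_eq_card_filter]
  set C := (Finset.Icc (k + 1) (k + s)).filter (· ∈ A)
  have hC {a} (ha : a ∈ C) : a ∈ A ∧ k + 1 ≤ a ∧ a ≤ k + s := by
    simp only [C, Finset.mem_filter, Finset.mem_Icc] at ha
    exact ⟨ha.2, ha.1⟩
  have hne {i j a a'} (hji : j < i) (ha : a ∈ C) (ha' : a' ∈ C) : a + e j ≠ a' + e i := by
    intro heq
    have := he hji.le
    exact hD i j hji ⟨a, (hC ha).1, a', (hC ha').1, by omega, by omega⟩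
  have hdisj : (Set.univ : Set ℕ).PairwiseDisjoint fun i => C.image (· + e i) := by
    intro i _ j _ hij
    simp only [onFun, Finset.disjoint_left, Finset.mem_image]
    rintro _ ⟨a, ha, rfl⟩ ⟨a', ha', heq⟩
    rcases hij.lt_or_gt with hlt | hlt
    · exact hne hlt ha ha' heq.symm
    · exact hne hlt ha' ha heq
  have hsub : (Finset.range K).biUnion (fun i => C.image (· + e i)) ⊆
      Finset.Icc (k + 1) (k + s + e K) := by
    simp only [Finset.biUnion_subset, Finset.image_subset_iff, Finset.mem_Icc, Finset.mem_range]
    intro i hi a ha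
    have := he hi.le
    have := hC ha
    omega
  calc K * C.card = ∑ i ∈ Finset.range K, (C.image (· + e i)).card := by
        simp [Finset.card_image_of_injective C (add_left_injective _)]
    _ = ((Finset.range K).biUnion fun i => C.image (· + e i)).card :=
        (Finset.card_biUnion (hdisj.subset (Set.subset_univ _))).symm
    _ ≤ (Finset.Icc (k + 1) (k + s + e K)).card := Finset.card_le_card hsub
    _ = s + e K := by simp; omega

theorem syndeticN_diffSet_of_upperBanachDensity_pos (h : 0 < upperBanachDensity A) :
    SyndeticN (diffSet A) := by
  by_contra hA
  obtain ⟨e, he, hD⟩ := exists_monotone_sub_notMem_diffSet hA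
  obtain ⟨K, hK⟩ := exists_nat_one_div_lt h
  have hcount (k s : ℕ) : ((A ∩ Set.Icc (k + 1) (k + s)).ncard : ℝ) ≤
      1 / (K + 1 : ℝ) * s + e (K + 1) / (K + 1 : ℝ) := by
    rw [one_div_mul_eq_div, ← add_div, le_div_iff₀ (by positivity), mul_comm]
    exact_mod_cast mul_ncard_inter_Icc_le he hD (K + 1) k s
  linarith [upperBanachDensity_le_of_ncard_le hcount]

end DifferenceSet

lemma SyndeticN.of_add_mem {S S' : Set ℕ} (hS : SyndeticN S) (n : ℕ) (h : ∀ d ∈ S, d + n ∈ S') :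
    SyndeticN S' := by
  obtain ⟨M, hM, hgap⟩ := hS
  refine ⟨M + n, by omega, fun m => ?_⟩
  obtain ⟨d, hd, hmd, hdM⟩ := hgap m
  exact ⟨d + n, h d hd, by omega, by omega⟩

section Dynamics

variable {X : Type*} {f : X → X} {x : X} {U V : Set X}

/-- The witness for `d = p - q` is `f^[q] x ∈ U`, which `f^[d + n]` sends to `f^[n] (f^[p] x) ∈ V`. -/
lemma iterate_image_inter_nonempty_of_mem_diffSet {n d : ℕ}
    (hd : d ∈ diffSet {m | f^[m] x ∈ U ∩ f^[n] ⁻¹' V}) : (f^[d + n] '' U ∩ V).Nonempty := by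
  obtain ⟨p, ⟨-, hpV⟩, q, ⟨hqU, -⟩, hqp, rfl⟩ := hd
  refine ⟨f^[p - q + n] (f^[q] x), ⟨_, hqU, rfl⟩, ?_⟩
  rwa [← iterate_add_apply, show p - q + n + q = n + p by omega, iterate_add_apply]

lemma inter_preimage_iterate_sub_nonempty {a b : ℕ} (hab : a ≤ b) (ha : f^[a] x ∈ U)
    (hb : f^[b] x ∈ V) : (U ∩ f^[b - a] ⁻¹' V).Nonempty :=
  ⟨f^[a] x, ha, by rwa [Set.mem_preimage, ← iterate_add_apply, Nat.sub_add_cancel hab]⟩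

end Dynamics

theorem reiteratively_hypercyclic_implies_topologically_ergodic_general
    {X : Type*} [AddCommGroup X] [Module ℝ X] [UniformSpace X]
    (T : X →L[ℝ] X)
    (h : ∃ x : X, ∀ U : Set X, IsOpen U → U.Nonempty →
        0 < upperBanachDensity {n : ℕ | (T ^ n) x ∈ U}) :
    ∀ U V : Set X, IsOpen U → IsOpen V → U.Nonempty → V.Nonempty →
      SyndeticN {n : ℕ | ((T ^ n) '' U ∩ V).Nonempty} := by
  obtain ⟨x, hx⟩ := h
  simp only [FunLike.coe_pow_eq_iterate] at hx ⊢
  intro U V hU hV hUne hVne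
  obtain ⟨a, haU, -⟩ := exists_mem_ge_of_upperBanachDensity_pos (hx U hU hUne) 0
  obtain ⟨b, hbV, hab⟩ := exists_mem_ge_of_upperBanachDensity_pos (hx V hV hVne) a
  have hW : IsOpen (U ∩ T^[b - a] ⁻¹' V) := hU.inter (hV.preimage (T.continuous.iterate _))
  have hWne := inter_preimage_iterate_sub_nonempty hab haU hbV
  exact (syndeticN_diffSet_of_upperBanachDensity_pos (hx _ hW hWne)).of_add_mem (b - a)
    fun _ hd => iterate_image_inter_nonempty_of_mem_diffSet hd

/-- A reiteratively hypercyclic operator on a separable F-space is topologically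
ergodic: all sets `N(U,V)` are syndetic. -/
theorem reiteratively_hypercyclic_implies_topologically_ergodic
    {X : Type*} [AddCommGroup X] [Module ℝ X] [UniformSpace X] [IsUniformAddGroup X]
    [ContinuousSMul ℝ X] [CompleteSpace X] [TopologicalSpace.MetrizableSpace X]
    [TopologicalSpace.SeparableSpace X]
    (T : X →L[ℝ] X)
    (h : ∃ x : X, ∀ U : Set X, IsOpen U → U.Nonempty →
        0 < upperBanachDensity {n : ℕ | (T ^ n) x ∈ U}) :
    ∀ U V : Set X, IsOpen U → IsOpen V → U.Nonempty → V.Nonempty →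
      SyndeticN {n : ℕ | ((T ^ n) '' U ∩ V).Nonempty} :=
  reiteratively_hypercyclic_implies_topologically_ergodic_general T h
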